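/- For every n ≥ 1 and every (i_0,…,i_n) ∈ ω_n, the weight subgraph G(i_0,…,i_n) of G_n is connected. Moreover, if 0 ≤ s < t ≤ n and both (i_0,…,i_s,…,i_t,…,i_n) and (i_0,…,i_s+1,…,i_t−1,…,i_n) belong to ω_n, then there exists an array a of weight (i_0,…,i_n) with a_{s,t} = 0; the array obtained from a by changing its (s,t) entry to 1 then has weight (i_0,…,i_s+1,…,i_t−1,…,i_n). -/

import Mathlib

/-- `UT n`: strictly upper triangular 0-1 arrays `(a_{i,j})_{0 ≤ i < j ≤ n}`,
encoded as functions on `Fin (n+1) × Fin (n+1)` vanishing off the region `i < j`. -/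
def UT (n : ℕ) : Type :=
  {a : Fin (n + 1) → Fin (n + 1) → ℤ //
    ∀ i j : Fin (n + 1), (i < j → a i j = 0 ∨ a i j = 1) ∧ (¬ i < j → a i j = 0)}

/-- Adjacency in `G_n`: `a` and `b` differ exactly on a triple of positions
`(i,j), (j,l), (i,l)` with `i < j < l`, where one of them has entries `1, 1, 0` and
the other `0, 0, 1`. -/
def UTAdj {n : ℕ} (a b : UT n) : Prop :=
  ∃ i j l : Fin (n + 1), i < j ∧ j < l ∧
    ((a.1 i j = 1 ∧ a.1 j l = 1 ∧ a.1 i l = 0 ∧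
        b.1 i j = 0 ∧ b.1 j l = 0 ∧ b.1 i l = 1) ∨
      (b.1 i j = 1 ∧ b.1 j l = 1 ∧ b.1 i l = 0 ∧
        a.1 i j = 0 ∧ a.1 j l = 0 ∧ a.1 i l = 1)) ∧
    ∀ s t : Fin (n + 1),
      ¬ ((s = i ∧ t = j) ∨ (s = j ∧ t = l) ∨ (s = i ∧ t = l)) → a.1 s t = b.1 s t

/-- The weight of an array: `w_s(a) = ∑_{k<s} (1 - a_{k,s}) + ∑_{k>s} a_{s,k}`. -/
def UTweight {n : ℕ} (a : UT n) : Fin (n + 1) → ℤ := fun s =>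
  (∑ k : Fin (n + 1), if k < s then 1 - a.1 k s else 0) +
    ∑ k : Fin (n + 1), if s < k then a.1 s k else 0

/-- Membership in `ω_n`: the tuple sums to `0 + 1 + ⋯ + n` and every subset of the
entries sums to at least `0 + 1 + ⋯ + (s-1)` where `s` is the size of the subset. -/
def InOmega {n : ℕ} (c : Fin (n + 1) → ℤ) : Prop :=
  (∑ k : Fin (n + 1), c k = ∑ k : Fin (n + 1), (k : ℤ)) ∧
    ∀ s : Finset (Fin (n + 1)), (∑ t ∈ Finset.range s.card, (t : ℤ)) ≤ ∑ k ∈ s, c k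

/-- The array obtained from `a` by setting the entry at position `(s,t)` (with `s < t`)
to `1`. -/
def UTset {n : ℕ} (a : UT n) (s t : Fin (n + 1)) : UT n :=
  ⟨fun i j => if i = s ∧ j = t ∧ s < t then 1 else a.1 i j, by
    intro i j
    constructor
    · intro hij
      by_cases h : i = s ∧ j = t ∧ s < t
      · simp [h]
      · simp only [if_neg h]; exact (a.2 i j).1 hij
    · intro hij
      have h : ¬ (i = s ∧ j = t ∧ s < t) := by
        rintro ⟨rfl, rfl, hst⟩; exact hij hst
      simp only [if_neg h]; exact (a.2 i j).2 hij⟩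

/-!
Read an array `a ∈ G_n` as the tournament on `{0, …, n}` in which, for `x < y`, the edge
`{x, y}` points from `x` to `y` iff `a x y = 1` (`UT.Arc`). The weight of `a` is its score
sequence, `ω_n` is the set of sequences satisfying Landau's inequalities, and two arrays are
adjacent iff one arises from the other by reversing a cyclic triangle.

Connectedness: if `a ≠ b` have the same scores, the edges of `a` that are reversed in `b` form a
digraph with equal in- and out-degree at every vertex, so each of its edges lies on a cycle. Along
such a cycle two consecutive edges `x → y → z` have a chord `{x, z}` that either closes a cyclic
triangle in `a` or in `b`, or is itself reversed and shortens the cycle. Reversing that triangle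
removes two disagreements between `a` and `b` and creates at most one.

Second part: reversing a path from `s` to `t` moves one unit of score from `s` to `t`. The set of
vertices reachable from `s` has no outgoing edges, so its score sum is the least one Landau's
inequality allows; hence it contains a vertex whose score is below target as soon as `s` is
above target. This realises every `α ∈ ω_n`, and for `α, α + e_s - e_t ∈ ω_n` it turns a
tournament of score `α + e_s - e_t` into one of score `α` with `t → s`: reverse its edge `s → t`
if there is one, and otherwise a path from `s` to `t`, which leaves the edge `t → s` alone.
-/

open Finset Relation

lemma reflTransGen_of_balanced {V : Type*} [Fintype V] {E : V → V → Prop} [DecidableRel E]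
    (hbal : ∀ v, #{k | E v k} = #{k | E k v}) {x y : V} (h : E x y) : ReflTransGen E y x := by
  classical
  -- Summing out- and in-degrees over the set `R` reachable from `y`, which no edge leaves,
  -- shows that no edge enters `R`.
  set R : Finset V := {v | ReflTransGen E y v}
  have closed {v k} (hv : v ∈ R) (hvk : E v k) : k ∈ R := by
    simp only [R, mem_filter, mem_univ, true_and] at hv ⊢
    exact hv.tail hvk
  have out_eq : ∑ v ∈ R, #{k | E v k} = ∑ v ∈ R, ∑ k ∈ R, if E v k then 1 else 0 := by
    refine sum_congr rfl fun v hv => ?_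
    rw [card_filter, ← sum_add_sum_compl R, add_eq_left]
    exact sum_eq_zero fun k hk => if_neg fun hvk => mem_compl.1 hk (closed hv hvk)
  have in_eq : ∑ v ∈ R, #{k | E k v} = (∑ v ∈ R, ∑ k ∈ R, if E v k then 1 else 0) +
      ∑ v ∈ R, ∑ k ∈ Rᶜ, if E k v then 1 else 0 := by
    rw [sum_comm, ← sum_add_distrib]
    exact sum_congr rfl fun v _ => by rw [card_filter, sum_add_sum_compl]
  have no_entry : ∑ v ∈ R, ∑ k ∈ Rᶜ, (if E k v then 1 else 0) = 0 := by
    rw [sum_congr rfl fun v _ => hbal v, in_eq] at out_eq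
    omega
  by_contra hx
  have hy : y ∈ R := by simp [R, ReflTransGen.refl]
  have := (sum_eq_zero_iff.1 no_entry) y hy
  rw [sum_eq_zero_iff] at this
  simpa [h] using this x (by simpa [R] using hx)

lemma exists_nodup_isChain_of_reflTransGen {α : Type*} {r : α → α → Prop} {a b : α}
    (h : ReflTransGen r a b) :
    ∃ l, (a :: l).IsChain r ∧ (a :: l).Nodup ∧ (a :: l).getLast? = some b := by
  induction h using ReflTransGen.head_induction_on with
  | refl => exact ⟨[], by simp, by simp, rfl⟩
  | @head a c hac _ ih =>
    obtain ⟨l, hchain, hnodup, hlast⟩ := ih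
    by_cases ha : a ∈ c :: l
    · obtain ⟨l₁, l₂, hl⟩ := List.append_of_mem ha
      rw [hl] at hchain hnodup hlast
      exact ⟨l₂, hchain.right_of_append, hnodup.of_append_right,
        by rwa [List.getLast?_append_of_ne_nil _ (List.cons_ne_nil _ _)] at hlast⟩
    · exact ⟨c :: l, List.isChain_cons_cons.2 ⟨hac, hchain⟩,
        List.nodup_cons.2 ⟨ha, hnodup⟩, by simpa using hlast⟩

namespace UT

variable {n : ℕ} {a b : UT n} {x y z s t : Fin (n + 1)} {α : Fin (n + 1) → ℤ}

lemma entry_eq_zero_or_one (a : UT n) (p q : Fin (n + 1)) : a.1 p q = 0 ∨ a.1 p q = 1 := by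
  by_cases h : p < q
  · exact (a.2 p q).1 h
  · exact Or.inl ((a.2 p q).2 h)

def Arc (a : UT n) (x y : Fin (n + 1)) : Prop :=
  (x < y ∧ a.1 x y = 1) ∨ (y < x ∧ a.1 y x = 0)

instance (a : UT n) : DecidableRel a.Arc := fun _ _ => inferInstanceAs (Decidable (_ ∨ _))

lemma arc_iff_of_lt (h : x < y) : a.Arc x y ↔ a.1 x y = 1 := by
  simp [Arc, h, h.not_gt]

lemma arc_swap_iff_of_lt (h : x < y) : a.Arc y x ↔ a.1 x y = 0 := by
  simp [Arc, h, h.not_gt]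

lemma Arc.irrefl (x : Fin (n + 1)) : ¬ a.Arc x x := by
  simp [Arc]

lemma Arc.asymm (h : a.Arc x y) : ¬ a.Arc y x := by
  rcases h with ⟨h, e⟩ | ⟨h, e⟩ <;> simp_all [Arc, h.not_gt]

lemma Arc.ne (h : a.Arc x y) : x ≠ y := by
  rintro rfl; exact Arc.irrefl x h

lemma arc_or_arc (h : x ≠ y) : a.Arc x y ∨ a.Arc y x := by
  rcases h.lt_or_gt with h | h
  · rcases a.entry_eq_zero_or_one x y with e | e
    · exact .inr ((arc_swap_iff_of_lt h).2 e)
    · exact .inl ((arc_iff_of_lt h).2 e)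
  · rcases a.entry_eq_zero_or_one y x with e | e
    · exact .inl ((arc_swap_iff_of_lt h).2 e)
    · exact .inr ((arc_iff_of_lt h).2 e)

lemma not_arc_iff (h : x ≠ y) : ¬ a.Arc x y ↔ a.Arc y x :=
  ⟨(arc_or_arc h).resolve_left, Arc.asymm⟩

lemma ext_arc (h : ∀ x y, a.Arc x y ↔ b.Arc x y) : a = b := by
  refine Subtype.ext (funext₂ fun p q => ?_)
  by_cases hpq : p < q
  · have := h p q
    rw [arc_iff_of_lt hpq, arc_iff_of_lt hpq] at this
    rcases a.entry_eq_zero_or_one p q with e | e <;>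
      rcases b.entry_eq_zero_or_one p q with e' | e' <;> simp_all
  · rw [(a.2 p q).2 hpq, (b.2 p q).2 hpq]

lemma weight_eq_sum_arc (a : UT n) (v : Fin (n + 1)) :
    UTweight a v = ∑ k, if a.Arc v k then 1 else 0 := by
  rw [UTweight, ← sum_add_distrib]
  refine sum_congr rfl fun k _ => ?_
  rcases lt_trichotomy k v with h | rfl | h
  · rcases a.entry_eq_zero_or_one k v with e | e <;>
      simp [h, h.not_gt, e, arc_swap_iff_of_lt h]
  · simp [Arc.irrefl]
  · rcases a.entry_eq_zero_or_one v k with e | e <;>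
      simp [h, h.not_gt, e, arc_iff_of_lt h]

def reverseOn (a : UT n) (S : Finset (Fin (n + 1))) : UT n :=
  ⟨fun p q => if p ∈ S ∧ q ∈ S ∧ p < q then 1 - a.1 p q else a.1 p q, fun p q => by
    refine ⟨fun h => ?_, fun h => ?_⟩ <;> dsimp only
    · split_ifs
      · rcases a.entry_eq_zero_or_one p q with e | e <;> simp [e]
      · exact (a.2 p q).1 h
    · simp [h, (a.2 p q).2 h]⟩

lemma arc_reverseOn (S : Finset (Fin (n + 1))) :
    (a.reverseOn S).Arc x y ↔ if x ∈ S ∧ y ∈ S then a.Arc y x else a.Arc x y := by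
  rcases lt_trichotomy x y with h | rfl | h
  · rw [arc_iff_of_lt h, arc_iff_of_lt h, arc_swap_iff_of_lt h]
    rcases a.entry_eq_zero_or_one x y with e | e <;> simp [reverseOn, h, e]
  · simp [Arc.irrefl]
  · rw [arc_swap_iff_of_lt h, arc_swap_iff_of_lt h, arc_iff_of_lt h]
    rcases a.entry_eq_zero_or_one y x with e | e <;> simp [reverseOn, h, e] <;> tauto

lemma arc_reverseOn_of_notMem {S : Finset (Fin (n + 1))} (h : ¬ (x ∈ S ∧ y ∈ S)) :
    (a.reverseOn S).Arc x y ↔ a.Arc x y := by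
  rw [arc_reverseOn, if_neg h]

lemma weight_reverseOn (a : UT n) (S : Finset (Fin (n + 1))) (v : Fin (n + 1)) :
    UTweight (a.reverseOn S) v = UTweight a v +
      if v ∈ S then ∑ k ∈ S, ((if a.Arc k v then 1 else 0) - if a.Arc v k then 1 else 0)
      else 0 := by
  simp only [weight_eq_sum_arc]
  split_ifs with hv
  · have h (k) : (if (a.reverseOn S).Arc v k then (1 : ℤ) else 0) =
        if k ∈ S then (if a.Arc k v then 1 else 0) else if a.Arc v k then 1 else 0 := by
      by_cases hk : k ∈ S <;> simp [arc_reverseOn, hv, hk]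
    rw [sum_congr rfl fun k _ => h k, ← sum_add_sum_compl S,
      ← sum_add_sum_compl S (fun k => if a.Arc v k then _ else _),
      sum_congr rfl fun k hk => if_pos hk, sum_congr rfl fun k hk => if_neg (mem_compl.1 hk),
      sum_sub_distrib]
    ring
  · simp [arc_reverseOn, hv]

lemma weight_reverseOn_pair (h : a.Arc x y) :
    UTweight (a.reverseOn {x, y}) = UTweight a - Pi.single x 1 + Pi.single y 1 := by
  funext v
  rw [weight_reverseOn, sum_pair h.ne]
  by_cases hx : v = x
  · subst hx; simp [h, h.asymm, h.ne, Arc.irrefl]; ring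
  · by_cases hy : v = y
    · subst hy; simp [h, h.asymm, hx, Arc.irrefl]
    · simp [hx, hy]

lemma weight_reverseOn_cyclic (hxy : a.Arc x y) (hyz : a.Arc y z) (hzx : a.Arc z x) :
    UTweight (a.reverseOn {x, y, z}) = UTweight a := by
  funext v
  rw [weight_reverseOn, sum_insert (by simp [hxy.ne, hzx.ne.symm]), sum_pair hyz.ne]
  by_cases hv : v ∈ ({x, y, z} : Finset _)
  · rw [if_pos hv]
    simp only [mem_insert, mem_singleton] at hv
    rcases hv with rfl | rfl | rfl <;>
      simp [hxy, hyz, hzx, hxy.asymm, hyz.asymm, hzx.asymm, Arc.irrefl]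
  · rw [if_neg hv, add_zero]

lemma utAdj_reverseOn_of_lt {i j l : Fin (n + 1)} (hij : i < j) (hjl : j < l)
    (h : (a.Arc i j ∧ a.Arc j l ∧ a.Arc l i) ∨ (a.Arc i l ∧ a.Arc l j ∧ a.Arc j i)) :
    UTAdj a (a.reverseOn {i, j, l}) := by
  have hil := hij.trans hjl
  simp only [arc_iff_of_lt, arc_swap_iff_of_lt, hij, hjl, hil] at h
  refine ⟨i, j, l, hij, hjl, ?_, fun s t hst => ?_⟩
  · rcases h with ⟨e₁, e₂, e₃⟩ | ⟨e₁, e₂, e₃⟩ <;>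
      simp [reverseOn, hij, hjl, hil, e₁, e₂, e₃]
  · refine (if_neg ?_).symm
    rintro ⟨hs, ht, hlt⟩
    simp only [mem_insert, mem_singleton] at hs ht
    rcases hs with rfl | rfl | rfl <;> rcases ht with rfl | rfl | rfl <;> simp_all <;> omega

lemma utAdj_reverseOn (hxy : a.Arc x y) (hyz : a.Arc y z) (hzx : a.Arc z x) :
    UTAdj a (a.reverseOn {x, y, z}) := by
  have of_min {x y z} (hxy : a.Arc x y) (hyz : a.Arc y z) (hzx : a.Arc z x) (hy : x < y)
      (hz : x < z) : UTAdj a (a.reverseOn {x, y, z}) := by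
    rcases hyz.ne.lt_or_gt with h | h
    · exact utAdj_reverseOn_of_lt hy h (.inl ⟨hxy, hyz, hzx⟩)
    · rw [pair_comm y z]
      exact utAdj_reverseOn_of_lt hz h (.inr ⟨hxy, hyz, hzx⟩)
  have rot {x y z : Fin (n + 1)} : ({x, y, z} : Finset _) = {y, z, x} := by ext; simp; tauto
  rcases hxy.ne.lt_or_gt with h₁ | h₁ <;> rcases hzx.ne.lt_or_gt with h₂ | h₂
  · rw [rot, rot]; exact of_min hzx hxy hyz h₂ (h₂.trans h₁)
  · exact of_min hxy hyz hzx h₁ h₂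
  · rcases hyz.ne.lt_or_gt with h₃ | h₃
    · rw [rot]; exact of_min hyz hzx hxy h₃ h₁
    · rw [rot, rot]; exact of_min hzx hxy hyz h₂ h₃
  · rw [rot]; exact of_min hyz hzx hxy (h₁.trans h₂) h₁

theorem _root_.UTAdj.symm (h : UTAdj a b) : UTAdj b a := by
  obtain ⟨i, j, l, hij, hjl, hpat, hoff⟩ := h
  exact ⟨i, j, l, hij, hjl, hpat.symm, fun s t hst => (hoff s t hst).symm⟩

def Disagree (a b : UT n) (x y : Fin (n + 1)) : Prop := a.Arc x y ∧ b.Arc y x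

instance : DecidableRel (a.Disagree b) := fun _ _ => inferInstanceAs (Decidable (_ ∧ _))

lemma exists_disagree_of_ne (h : a ≠ b) : ∃ x y, a.Disagree b x y := by
  by_contra! H
  refine h (ext_arc fun x y => ⟨fun hab => ?_, fun hba => ?_⟩)
  · by_contra hb
    exact H x y ⟨hab, (not_arc_iff hab.ne).1 hb⟩
  · by_contra ha
    exact H y x ⟨(not_arc_iff hba.ne).1 ha, hba⟩

lemma weight_sub_weight (a b : UT n) (v : Fin (n + 1)) :
    UTweight a v - UTweight b v = #{k | a.Disagree b v k} - (#{k | a.Disagree b k v} : ℤ) := by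
  simp only [weight_eq_sum_arc, natCast_card_filter, ← sum_sub_distrib]
  refine sum_congr rfl fun k _ => ?_
  by_cases hk : v = k
  · subst hk; simp [Disagree, Arc.irrefl]
  · rcases arc_or_arc (a := a) hk with ha | ha <;> rcases arc_or_arc (a := b) hk with hb | hb <;>
      simp [Disagree, ha, hb, ha.asymm, hb.asymm]

lemma Disagree.reflTransGen_swap (hw : UTweight a = UTweight b) (h : a.Disagree b x y) :
    ReflTransGen (a.Disagree b) y x := by
  refine reflTransGen_of_balanced (fun v => ?_) h
  have := weight_sub_weight a b v
  rw [hw, sub_self] at this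
  omega

lemma exists_disagree_triangle (hxy : a.Disagree b x y)
    (hyx : ReflTransGen (a.Disagree b) y x) :
    ∃ x y z, a.Disagree b x y ∧ a.Disagree b y z ∧ (a.Arc z x ∨ b.Arc x z) := by
  induction hyx using ReflTransGen.head_induction_on with
  | refl => exact absurd hxy.1 (Arc.irrefl x)
  | @head y p hyp _ ih =>
    have hpx : p ≠ x := by rintro rfl; exact hxy.1.asymm hyp.1
    rcases arc_or_arc (a := a) hpx with ha | ha
    · exact ⟨x, y, p, hxy, hyp, .inl ha⟩
    rcases arc_or_arc (a := b) hpx with hb | hb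
    · exact ih ⟨ha, hb⟩
    · exact ⟨x, y, p, hxy, hyp, .inr hb⟩

def arcDist (a b : UT n) : ℕ := #{p : Fin (n + 1) × Fin (n + 1) | a.Disagree b p.1 p.2}

lemma arcDist_comm (a b : UT n) : a.arcDist b = b.arcDist a :=
  card_equiv (Equiv.prodComm _ _) fun _ => by
    simp only [mem_filter, mem_univ, true_and]; simp [Disagree, and_comm]

lemma arcDist_reverseOn_lt (hxy : a.Disagree b x y) (hyz : a.Disagree b y z) (hzx : a.Arc z x) :
    (a.reverseOn {x, y, z}).arcDist b < a.arcDist b := by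
  set D : Finset (Fin (n + 1) × Fin (n + 1)) := {p | a.Disagree b p.1 p.2}
  have hsub : ({p | (a.reverseOn {x, y, z}).Disagree b p.1 p.2} : Finset _) ⊆
      insert (x, z) ((D.erase (x, y)).erase (y, z)) := by
    rintro ⟨u, w⟩ h
    simp only [mem_filter, mem_univ, true_and, Disagree, arc_reverseOn] at h
    by_cases hS : u ∈ ({x, y, z} : Finset _) ∧ w ∈ ({x, y, z} : Finset _)
    · rw [if_pos hS] at h
      obtain ⟨hu, hw⟩ := hS
      simp only [mem_insert, mem_singleton] at hu hw
      have := hxy.1.asymm; have := hxy.2.asymm; have := hyz.1.asymm; have := hyz.2.asymm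
      have := hzx.asymm
      rcases hu with rfl | rfl | rfl <;> rcases hw with rfl | rfl | rfl <;>
        first | exact mem_insert_self _ _ | simp_all [Arc.irrefl]
    · rw [if_neg hS] at h
      have hD : (u, w) ∈ D := by simp only [D, mem_filter, mem_univ, true_and]; exact h
      refine mem_insert_of_mem (mem_erase.2 ⟨?_, mem_erase.2 ⟨?_, hD⟩⟩)
      all_goals rintro ⟨⟩; simp at hS
  have hxy' : (x, y) ∈ D := by simp [D, hxy]
  have hyz' : (y, z) ∈ D.erase (x, y) := by simp [D, hyz, hxy.1.ne.symm]
  have hD := card_pos.2 ⟨_, hyz'⟩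
  rw [card_erase_of_mem hxy'] at hD
  calc (a.reverseOn {x, y, z}).arcDist b ≤ #(insert (x, z) ((D.erase (x, y)).erase (y, z))) :=
        card_le_card hsub
    _ ≤ #D - 1 - 1 + 1 := by
        grw [card_insert_le, card_erase_of_mem hyz', card_erase_of_mem hxy']
    _ < #D := by omega

theorem reflTransGen_utAdj (α : Fin (n + 1) → ℤ) (a b : {a : UT n // UTweight a = α}) :
    ReflTransGen (fun x y : {a : UT n // UTweight a = α} => UTAdj x.1 y.1) a b := by
  induction hd : a.1.arcDist b.1 using Nat.strong_induction_on generalizing a b with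
  | _ d ih =>
  by_cases hab : a = b
  · rw [hab]
  obtain ⟨x, y, hxy⟩ := exists_disagree_of_ne (Subtype.coe_injective.ne hab)
  obtain ⟨x, y, z, hxy, hyz, hzx | hxz⟩ :=
    exists_disagree_triangle hxy (hxy.reflTransGen_swap (a.2.trans b.2.symm))
  · let a' : {a : UT n // UTweight a = α} :=
      ⟨a.1.reverseOn {x, y, z}, (weight_reverseOn_cyclic hxy.1 hyz.1 hzx).trans a.2⟩
    exact .head (utAdj_reverseOn hxy.1 hyz.1 hzx)
      (ih _ (hd ▸ arcDist_reverseOn_lt hxy hyz hzx) a' b rfl)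
  · let b' : {a : UT n // UTweight a = α} :=
      ⟨b.1.reverseOn {z, y, x}, (weight_reverseOn_cyclic hyz.2 hxy.2 hxz).trans b.2⟩
    have hlt : a.1.arcDist b'.1 < d := by
      rw [arcDist_comm, ← hd, arcDist_comm a.1]
      exact arcDist_reverseOn_lt ⟨hyz.2, hyz.1⟩ ⟨hxy.2, hxy.1⟩ hxz
    exact .tail (ih _ hlt a b' rfl) (utAdj_reverseOn hyz.2 hxy.2 hxz).symm

lemma exists_reverse_path (l : List (Fin (n + 1))) (a : UT n) (s t : Fin (n + 1))
    (hchain : (s :: l).IsChain a.Arc) (hnodup : (s :: l).Nodup)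
    (hlast : (s :: l).getLast? = some t) :
    ∃ a' : UT n, UTweight a' = UTweight a - Pi.single s 1 + Pi.single t 1 ∧
      ∀ x ∉ l, ∀ y, a.Arc y x → a'.Arc y x := by
  induction l generalizing a s with
  | nil =>
    obtain rfl : s = t := by simpa using hlast
    exact ⟨a, by simp, fun _ _ _ h => h⟩
  | cons v l ih =>
    rw [List.isChain_cons_cons] at hchain
    obtain ⟨hsv, hchain⟩ := hchain
    obtain ⟨hs, hnodup⟩ := List.nodup_cons.1 hnodup
    have only_sv {x y} (hne : x ≠ s ∨ y ≠ v) (hxy : a.Arc x y) :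
        ¬ (x ∈ ({s, v} : Finset _) ∧ y ∈ ({s, v} : Finset _)) := by
      simp only [mem_insert, mem_singleton]
      rintro ⟨rfl | rfl, rfl | rfl⟩ <;> simp_all [Arc.irrefl, hsv.asymm]
    have hchain' : (v :: l).IsChain (a.reverseOn {s, v}).Arc :=
      hchain.imp_of_mem_imp fun x y hx _ hxy =>
        (arc_reverseOn_of_notMem (only_sv (.inl (ne_of_mem_of_not_mem hx hs)) hxy)).2 hxy
    obtain ⟨a', hw, hin⟩ := ih _ v hchain' hnodup (by simpa using hlast)
    refine ⟨a', by rw [hw, weight_reverseOn_pair hsv]; abel, fun x hx y hyx => hin x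
      (List.not_mem_of_not_mem_cons hx) y ?_⟩
    exact (arc_reverseOn_of_notMem (only_sv (.inr (List.ne_of_not_mem_cons hx)) hyx)).2 hyx

lemma exists_weight_shift (h : ReflTransGen a.Arc s t) :
    ∃ a' : UT n, UTweight a' = UTweight a - Pi.single s 1 + Pi.single t 1 ∧
      ∀ y, a.Arc y s → a'.Arc y s := by
  obtain ⟨l, hchain, hnodup, hlast⟩ := exists_nodup_isChain_of_reflTransGen h
  obtain ⟨a', hw, hin⟩ := exists_reverse_path l a s t hchain hnodup hlast
  exact ⟨a', hw, hin s (List.nodup_cons.1 hnodup).1⟩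

lemma sum_weight_of_closed {R : Finset (Fin (n + 1))}
    (hR : ∀ v ∈ R, ∀ k, a.Arc v k → k ∈ R) :
    ∑ v ∈ R, UTweight a v = ∑ i ∈ range #R, (i : ℤ) := by
  have hout : ∑ v ∈ R, UTweight a v = ∑ v ∈ R, ∑ k ∈ R, if a.Arc v k then 1 else 0 := by
    refine sum_congr rfl fun v hv => ?_
    rw [weight_eq_sum_arc, ← sum_add_sum_compl R, add_eq_left]
    exact sum_eq_zero fun k hk => if_neg fun h => mem_compl.1 hk (hR v hv k h)
  have hpairs :
      (∑ v ∈ R, UTweight a v) * 2 = ∑ v ∈ R, ∑ k ∈ R, if v = k then 0 else 1 := by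
    have hswap : (∑ v ∈ R, ∑ k ∈ R, if a.Arc v k then (1 : ℤ) else 0) =
        ∑ v ∈ R, ∑ k ∈ R, if a.Arc k v then 1 else 0 := sum_comm
    rw [mul_two, hout]
    nth_rw 2 [hswap]
    rw [← sum_add_distrib]
    refine sum_congr rfl fun v _ => ?_
    rw [← sum_add_distrib]
    refine sum_congr rfl fun k _ => ?_
    by_cases hvk : v = k
    · simp [hvk, Arc.irrefl]
    · rcases arc_or_arc (a := a) hvk with h | h <;> simp [hvk, h, h.asymm]
  have hoff (v) (hv : v ∈ R) : ∑ k ∈ R, (if v = k then (0 : ℤ) else 1) = #R - 1 := by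
    rw [sum_ite, filter_eq, if_pos hv]
    simp [filter_ne, hv, Nat.cast_pred (card_pos.2 ⟨v, hv⟩)]
  have htri (m : ℕ) : (∑ i ∈ range m, (i : ℤ)) * 2 = m * (m - 1) := by
    induction m with
    | zero => simp
    | succ m ih => rw [sum_range_succ, add_mul, ih]; push_cast; ring
  rw [sum_congr rfl hoff, sum_const, nsmul_eq_mul, ← htri] at hpairs
  omega

lemma sum_weight (a : UT n) : ∑ v, UTweight a v = ∑ k : Fin (n + 1), (k : ℤ) := by
  rw [sum_weight_of_closed fun _ _ k _ => mem_univ k, card_univ, Fintype.card_fin,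
    Fin.sum_univ_eq_sum_range (fun k => (k : ℤ))]

open Classical in
lemma sum_weight_reach_le (hα : InOmega α) (a : UT n) (s : Fin (n + 1)) :
    ∑ v ∈ {v | ReflTransGen a.Arc s v}, UTweight a v ≤
      ∑ v ∈ {v | ReflTransGen a.Arc s v}, α v := by
  rw [sum_weight_of_closed]
  · exact hα.2 _
  · simp only [mem_filter, mem_univ, true_and]
    exact fun v hv k hvk => hv.tail hvk

lemma exists_reach_lt (hα : InOmega α) (hs : α s < UTweight a s) :
    ∃ t, ReflTransGen a.Arc s t ∧ UTweight a t < α t := by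
  classical
  by_contra! h
  refine (sum_weight_reach_le hα a s).not_gt (sum_lt_sum (fun v hv => ?_) ⟨s, ?_, hs⟩)
  · exact h v (by simpa using hv)
  · simp [ReflTransGen.refl]

lemma exists_weight_closer (hα : InOmega α) (hb : UTweight b ≠ α) :
    ∃ b' : UT n, ∑ v, (UTweight b' v - α v).natAbs < ∑ v, (UTweight b v - α v).natAbs := by
  obtain ⟨s, hs⟩ : ∃ s, α s < UTweight b s := by
    by_contra! hle
    refine hb (funext fun v => ((sum_eq_sum_iff_of_le fun v _ => hle v).1 ?_ v (mem_univ v)))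
    rw [sum_weight, hα.1]
  obtain ⟨t, hst, ht⟩ := exists_reach_lt hα hs
  obtain ⟨b', hb', -⟩ := exists_weight_shift hst
  have hts : t ≠ s := by rintro rfl; exact lt_asymm hs ht
  refine ⟨b', sum_lt_sum (fun v _ => ?_) ⟨s, mem_univ s, ?_⟩⟩ <;> rw [hb']
  · by_cases hvs : v = s
    · subst hvs; simp [hts.symm]; omega
    · by_cases hvt : v = t
      · subst hvt; simp [hvs]; omega
      · simp [hvs, hvt]
  · simp [hts.symm]; omega

theorem exists_weight_eq (hα : InOmega α) : ∃ a : UT n, UTweight a = α := by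
  let gap (b : UT n) : ℕ := ∑ v, (UTweight b v - α v).natAbs
  obtain ⟨b, -, hmin⟩ := (measure gap).wf.has_min Set.univ
    ⟨⟨fun _ _ => 0, fun _ _ => ⟨fun _ => .inl rfl, fun _ => rfl⟩⟩, trivial⟩
  by_contra! h
  obtain ⟨b', hb'⟩ := exists_weight_closer hα (h b)
  exact hmin b' trivial hb'

lemma reflTransGen_of_weight_eq (hα : InOmega α)
    (hb : UTweight b = α + Pi.single s 1 - Pi.single t 1) : ReflTransGen b.Arc s t := by
  classical
  by_contra ht
  have := sum_weight_reach_le hα b s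
  simp [hb, sum_add_distrib, sum_sub_distrib, sum_pi_single', ReflTransGen.refl, ht] at this

lemma exists_weight_eq_arc (hα : InOmega α) (hα' : InOmega (α + Pi.single s 1 - Pi.single t 1))
    (hst : s ≠ t) : ∃ a : UT n, UTweight a = α ∧ a.Arc t s := by
  obtain ⟨b, hb⟩ := exists_weight_eq hα'
  rcases arc_or_arc (a := b) hst with h | h
  · exact ⟨b.reverseOn {s, t}, by rw [weight_reverseOn_pair h, hb]; abel,
      (arc_reverseOn _).2 (by simp [h])⟩
  · obtain ⟨a, ha, hin⟩ := exists_weight_shift (reflTransGen_of_weight_eq hα hb)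
    exact ⟨a, by rw [ha, hb]; abel, hin t h⟩

lemma UTset_eq_reverseOn (hst : s < t) (h : a.1 s t = 0) : UTset a s t = a.reverseOn {s, t} := by
  refine Subtype.ext (funext₂ fun i j => ?_)
  simp only [UTset, reverseOn, mem_insert, mem_singleton]
  by_cases hij : i = s ∧ j = t
  · obtain ⟨rfl, rfl⟩ := hij
    simp [hst, h]
  · rw [if_neg fun h => hij ⟨h.1, h.2.1⟩, if_neg]
    rintro ⟨rfl | rfl, rfl | rfl, hlt⟩ <;> simp_all [hst.not_gt]

end UT

lemma Function.update_add_update_sub {ι G : Type*} [DecidableEq ι] [AddGroup G] (f : ι → G)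
    {s t : ι} (hst : s ≠ t) (c : G) :
    update (update f s (f s + c)) t (f t - c) = f + Pi.single s c - Pi.single t c := by
  funext v
  by_cases hvt : v = t
  · subst hvt; simp [hst.symm]
  · by_cases hvs : v = s
    · subst hvs; simp [hvt]
    · simp [hvs, hvt]

theorem weight_subgraph_connected_general (n : ℕ)
    (α : Fin (n + 1) → ℤ) (hα : InOmega α) :
    (∀ a b : {a : UT n // UTweight a = α},
      Relation.ReflTransGen
        (fun x y : {a : UT n // UTweight a = α} => UTAdj x.1 y.1) a b) ∧
    (∀ s t : Fin (n + 1), s < t →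
      InOmega (Function.update (Function.update α s (α s + 1)) t (α t - 1)) →
      ∃ a : UT n, UTweight a = α ∧ a.1 s t = 0 ∧
        UTweight (UTset a s t) =
          Function.update (Function.update α s (α s + 1)) t (α t - 1)) := by
  refine ⟨UT.reflTransGen_utAdj α, fun s t hst hα' => ?_⟩
  rw [Function.update_add_update_sub α hst.ne] at hα' ⊢
  obtain ⟨a, ha, hts⟩ := UT.exists_weight_eq_arc hα hα' hst.ne
  have h0 := (UT.arc_swap_iff_of_lt hst).1 hts
  refine ⟨a, ha, h0, ?_⟩
  rw [UT.UTset_eq_reverseOn hst h0, pair_comm, UT.weight_reverseOn_pair hts, ha]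
  abel

/-- All weight subgraphs `G(α)` with `α ∈ ω_n` are connected; moreover, if both `α` and
the tuple `α'` obtained from `α` by replacing `α s` by `α s + 1` and `α t` by `α t - 1`
lie in `ω_n`, then some array `a` of weight `α` satisfies `a_{s,t} = 0`, and changing
this entry to `1` produces an array of weight `α'`. -/
theorem weight_subgraph_connected (n : ℕ) (hn : 1 ≤ n)
    (α : Fin (n + 1) → ℤ) (hα : InOmega α) :
    (∀ a b : {a : UT n // UTweight a = α},
      Relation.ReflTransGen
        (fun x y : {a : UT n // UTweight a = α} => UTAdj x.1 y.1) a b) ∧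
    (∀ s t : Fin (n + 1), s < t →
      InOmega (Function.update (Function.update α s (α s + 1)) t (α t - 1)) →
      ∃ a : UT n, UTweight a = α ∧ a.1 s t = 0 ∧
        UTweight (UTset a s t) =
          Function.update (Function.update α s (α s + 1)) t (α t - 1)) :=
  weight_subgraph_connected_general n α hα
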